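/- arXiv:1803.02739 — 2 statements merged into one kernel-verified Lean document; each statement's English description precedes it below -/
import Mathlib

section
/- Let F: W → [0,∞) be a function on the wedge W = {(b,d) ∈ R² : d > b ≥ 0} satisfying F(b,d) ≤ C₂ for all (b,d), and F(b,d) ≤ C₃ d^{-2} for all (b,d). Then for every σ > 0 and every L > 0, the integral of F over the band Δ_0^σ = {(b,d) ∈ W : d - b < σ} satisfies ∫_{Δ_0^σ} F ≤ (L C₂ + 3C₃/L) σ. In particular there exists C > 0, independent of σ, with ∫_{Δ_0^σ} F ≤ C σ. -/
open MeasureTheory Set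

section Aux

variable (σ L : ℝ)

private lemma hS_meas : MeasurableSet {x : ℝ × ℝ | 0 ≤ x.1 ∧ x.1 < x.2 ∧ x.2 - x.1 < σ} := by
  apply MeasurableSet.inter
  · exact measurableSet_le measurable_const measurable_fst
  apply MeasurableSet.inter
  · exact measurableSet_lt measurable_fst measurable_snd
  · exact measurableSet_lt (measurable_snd.sub measurable_fst) measurable_const

private lemma tail_integral {C₃ : ℝ} (hC₃ : 0 < C₃) (hL : 0 < L) :
    ∫⁻ d in Set.Ioi L, ENNReal.ofReal (C₃ / d ^ 2) = ENNReal.ofReal (C₃ / L) := by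
  have hInt : IntegrableOn (fun t : ℝ => t ^ (-2 : ℝ)) (Set.Ioi L) :=
    integrableOn_Ioi_rpow_of_lt (by norm_num) hL
  have hEq : ∀ x ∈ Set.Ioi L, C₃ * x ^ (-2 : ℝ) = C₃ / x ^ 2 := by
    intro x hx
    have hx0 : (0 : ℝ) < x := hL.trans hx
    rw [Real.rpow_neg hx0.le, show (2:ℝ) = ((2:ℕ):ℝ) by norm_num, Real.rpow_natCast]
    rw [div_eq_mul_inv]
  have hInt2 : IntegrableOn (fun t : ℝ => C₃ / t ^ 2) (Set.Ioi L) :=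
    IntegrableOn.congr_fun (hInt.const_mul C₃) hEq measurableSet_Ioi
  have hval : ∫ d in Set.Ioi L, C₃ / d ^ 2 = C₃ / L := by
    rw [← setIntegral_congr_fun measurableSet_Ioi hEq,
      integral_const_mul, integral_Ioi_rpow_of_lt (by norm_num) hL]
    rw [show (-2 : ℝ) + 1 = -1 by norm_num, Real.rpow_neg_one]
    field_simp
  rw [← hval, ← ofReal_integral_eq_lintegral_ofReal hInt2]
  filter_upwards [ae_restrict_mem measurableSet_Ioi] with x hx
  have hx0 : (0 : ℝ) < x := hL.trans hx
  positivity

end Aux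

private lemma key_lintegral (F : ℝ × ℝ → ℝ) (C₂ C₃ : ℝ)
    (hC₂ : 0 < C₂) (hC₃ : 0 < C₃)
    (hFb : ∀ x : ℝ × ℝ, F x ≤ C₂)
    (hFd : ∀ x : ℝ × ℝ, 0 ≤ x.1 → x.1 < x.2 → F x ≤ C₃ / x.2 ^ 2)
    {σ : ℝ} (hσ : 0 < σ) {L : ℝ} (hL : 0 < L) :
    ∫⁻ x in {x : ℝ × ℝ | 0 ≤ x.1 ∧ x.1 < x.2 ∧ x.2 - x.1 < σ}, ENNReal.ofReal (F x)
      ≤ ENNReal.ofReal ((L * C₂ + 3 * C₃ / L) * σ) := by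
  set S : Set (ℝ × ℝ) := {x : ℝ × ℝ | 0 ≤ x.1 ∧ x.1 < x.2 ∧ x.2 - x.1 < σ} with hS
  have hSm : MeasurableSet S := hS_meas σ
  set S₁ : Set (ℝ × ℝ) := S ∩ {x | x.2 ≤ L} with hS₁
  set S₂ : Set (ℝ × ℝ) := S ∩ {x | L < x.2} with hS₂
  have hS₁m : MeasurableSet S₁ := hSm.inter (measurableSet_le measurable_snd measurable_const)
  have hS₂m : MeasurableSet S₂ := hSm.inter (measurableSet_lt measurable_const measurable_snd)
  have hg₂ : Measurable (fun x : ℝ × ℝ => ENNReal.ofReal (C₃ / x.2 ^ 2)) :=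
    ENNReal.measurable_ofReal.comp (measurable_const.div ((measurable_snd.pow_const 2)))
  -- G : measurable majorant
  set G : ℝ × ℝ → ENNReal := fun x =>
    if x.2 ≤ L then ENNReal.ofReal C₂ else ENNReal.ofReal (C₃ / x.2 ^ 2) with hG
  have hGm : Measurable G :=
    Measurable.ite (measurableSet_le measurable_snd measurable_const) measurable_const hg₂
  have step1 : ∫⁻ x in S, ENNReal.ofReal (F x) ≤ ∫⁻ x in S, G x := by
    refine setLIntegral_mono hGm fun x hx => ?_
    by_cases h : x.2 ≤ L
    · simp only [hG, if_pos h]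
      exact ENNReal.ofReal_le_ofReal (hFb x)
    · simp only [hG, if_neg h]
      exact ENNReal.ofReal_le_ofReal (hFd x hx.1 hx.2.1)
  have hsplit : S = S₁ ∪ S₂ := by
    ext x; simp only [hS₁, hS₂, Set.mem_union, Set.mem_inter_iff, Set.mem_setOf_eq]
    constructor
    · intro h; rcases le_or_gt x.2 L with h' | h'
      · exact Or.inl ⟨h, h'⟩
      · exact Or.inr ⟨h, h'⟩
    · rintro (⟨h, _⟩ | ⟨h, _⟩) <;> exact h
  have hdisj : Disjoint S₁ S₂ := by
    refine Set.disjoint_left.mpr ?_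
    rintro x ⟨_, h1⟩ ⟨_, h2⟩
    simp only [Set.mem_setOf_eq] at h1 h2
    linarith
  -- bound on S₁
  have vol1 : volume S₁ ≤ ENNReal.ofReal σ * ENNReal.ofReal L := by
    rw [Measure.volume_eq_prod ℝ ℝ, Measure.prod_apply hS₁m]
    have hle : ∀ b : ℝ, volume (Prod.mk b ⁻¹' S₁)
        ≤ Set.indicator (Set.Ico 0 L) (fun _ => ENNReal.ofReal σ) b := by
      intro b
      by_cases hb : b ∈ Set.Ico 0 L
      · rw [Set.indicator_of_mem hb]
        have : Prod.mk b ⁻¹' S₁ ⊆ Set.Ioo b (b + σ) := by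
          rintro d ⟨⟨_, hbd, hds⟩, _⟩
          exact ⟨hbd, by linarith⟩
        calc volume (Prod.mk b ⁻¹' S₁) ≤ volume (Set.Ioo b (b + σ)) := measure_mono this
          _ = ENNReal.ofReal σ := by rw [Real.volume_Ioo]; ring_nf
      · rw [Set.indicator_of_notMem hb]
        have : Prod.mk b ⁻¹' S₁ = ∅ := by
          ext d; simp only [Set.mem_preimage, Set.mem_empty_iff_false, iff_false]
          rintro ⟨⟨h0, hbd, _⟩, hdL⟩
          simp only [Set.mem_setOf_eq] at hdL
          simp only [Set.mem_Ico, not_and, not_lt] at hb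
          have h1 : L ≤ b := hb h0
          have h2 : b < d := hbd
          have h3 : d ≤ L := hdL
          linarith
        simp [this]
    calc ∫⁻ b, volume (Prod.mk b ⁻¹' S₁)
        ≤ ∫⁻ b, Set.indicator (Set.Ico 0 L) (fun _ => ENNReal.ofReal σ) b :=
          lintegral_mono hle
      _ = ENNReal.ofReal σ * volume (Set.Ico 0 L) := by
          rw [lintegral_indicator measurableSet_Ico, setLIntegral_const]
      _ = ENNReal.ofReal σ * ENNReal.ofReal L := by
          rw [Real.volume_Ico]; ring_nf
  have bound1 : ∫⁻ x in S₁, G x ≤ ENNReal.ofReal C₂ * (ENNReal.ofReal σ * ENNReal.ofReal L) := by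
    have : ∫⁻ x in S₁, G x ≤ ∫⁻ _ in S₁, ENNReal.ofReal C₂ := by
      refine setLIntegral_mono measurable_const fun x hx => ?_
      have h2 : x.2 ≤ L := hx.2
      simp only [hG, if_pos h2]
      exact le_rfl
    refine this.trans ?_
    rw [setLIntegral_const]
    exact mul_le_mul_right vol1 _
  -- bound on S₂
  have bound2 : ∫⁻ x in S₂, G x ≤ ENNReal.ofReal (C₃ / L) * ENNReal.ofReal σ := by
    have h1 : ∫⁻ x in S₂, G x ≤ ∫⁻ x in S₂, ENNReal.ofReal (C₃ / x.2 ^ 2) := by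
      refine setLIntegral_mono hg₂ fun x hx => ?_
      have h2 : L < x.2 := hx.2
      simp only [hG, if_neg (not_le.mpr h2)]
      exact le_rfl
    refine h1.trans ?_
    rw [← lintegral_indicator hS₂m, Measure.volume_eq_prod ℝ ℝ,
      lintegral_prod_symm' _ (hg₂.indicator hS₂m)]
    have inner_le : ∀ d : ℝ,
        (∫⁻ b, Set.indicator S₂ (fun x : ℝ × ℝ => ENNReal.ofReal (C₃ / x.2 ^ 2)) (b, d))
          ≤ Set.indicator (Set.Ioi L) (fun d => ENNReal.ofReal (C₃ / d ^ 2) * ENNReal.ofReal σ) d := by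
      intro d
      have hrw : ∀ b : ℝ, Set.indicator S₂ (fun x : ℝ × ℝ => ENNReal.ofReal (C₃ / x.2 ^ 2)) (b, d)
          = Set.indicator {b : ℝ | (b, d) ∈ S₂} (fun _ => ENNReal.ofReal (C₃ / d ^ 2)) b := by
        intro b
        by_cases h : (b, d) ∈ S₂
        · rw [Set.indicator_of_mem h,
            Set.indicator_of_mem (show b ∈ {b : ℝ | (b, d) ∈ S₂} from h)]
        · rw [Set.indicator_of_notMem h,
            Set.indicator_of_notMem (show b ∉ {b : ℝ | (b, d) ∈ S₂} from h)]
      simp only [hrw]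
      have hbm : MeasurableSet {b : ℝ | (b, d) ∈ S₂} :=
        hS₂m.preimage (measurable_id.prodMk measurable_const)
      rw [lintegral_indicator hbm, setLIntegral_const]
      by_cases hd : d ∈ Set.Ioi L
      · rw [Set.indicator_of_mem hd]
        refine mul_le_mul_right ?_ _
        have : {b : ℝ | (b, d) ∈ S₂} ⊆ Set.Ioo (d - σ) d := by
          rintro b ⟨⟨_, hbd, hds⟩, _⟩
          exact ⟨by linarith, hbd⟩
        calc volume {b : ℝ | (b, d) ∈ S₂} ≤ volume (Set.Ioo (d - σ) d) := measure_mono this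
          _ = ENNReal.ofReal σ := by rw [Real.volume_Ioo]; ring_nf
      · rw [Set.indicator_of_notMem hd]
        have : {b : ℝ | (b, d) ∈ S₂} = ∅ := by
          ext b; simp only [Set.mem_setOf_eq, Set.mem_empty_iff_false, iff_false]
          rintro ⟨_, hdL⟩
          exact hd hdL
        simp [this]
    calc (∫⁻ d, ∫⁻ b, Set.indicator S₂ (fun x : ℝ × ℝ => ENNReal.ofReal (C₃ / x.2 ^ 2)) (b, d))
        ≤ ∫⁻ d, Set.indicator (Set.Ioi L)
            (fun d => ENNReal.ofReal (C₃ / d ^ 2) * ENNReal.ofReal σ) d :=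
          lintegral_mono inner_le
      _ = ∫⁻ d in Set.Ioi L, ENNReal.ofReal (C₃ / d ^ 2) * ENNReal.ofReal σ := by
          rw [lintegral_indicator measurableSet_Ioi]
      _ = (∫⁻ d in Set.Ioi L, ENNReal.ofReal (C₃ / d ^ 2)) * ENNReal.ofReal σ := by
          have hmeas : Measurable fun d : ℝ => ENNReal.ofReal (C₃ / d ^ 2) :=
            (measurable_const.div ((measurable_id (α := ℝ)).pow_const 2)).ennreal_ofReal
          rw [lintegral_mul_const (ENNReal.ofReal σ) hmeas]
      _ = ENNReal.ofReal (C₃ / L) * ENNReal.ofReal σ := by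
          rw [tail_integral L hC₃ hL]
  -- combine
  calc ∫⁻ x in S, ENNReal.ofReal (F x) ≤ ∫⁻ x in S, G x := step1
    _ = (∫⁻ x in S₁, G x) + ∫⁻ x in S₂, G x := by
        rw [hsplit, lintegral_union hS₂m hdisj]
    _ ≤ ENNReal.ofReal C₂ * (ENNReal.ofReal σ * ENNReal.ofReal L)
        + ENNReal.ofReal (C₃ / L) * ENNReal.ofReal σ := add_le_add bound1 bound2
    _ ≤ ENNReal.ofReal ((L * C₂ + 3 * C₃ / L) * σ) := by
        rw [← ENNReal.ofReal_mul hσ.le, ← ENNReal.ofReal_mul hC₂.le,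
          ← ENNReal.ofReal_mul (by positivity : (0:ℝ) ≤ C₃ / L),
          ← ENNReal.ofReal_add (by positivity) (by positivity)]
        apply ENNReal.ofReal_le_ofReal
        have h3 : C₃ / L ≤ 3 * C₃ / L := by
          gcongr
          linarith
        nlinarith [hσ.le, hC₂.le, div_nonneg hC₃.le hL.le]

/-- If `F` on the wedge `W = {(b,d) : d > b ≥ 0}` is nonnegative, bounded by `C₂`, and
satisfies `F(b,d) ≤ C₃ d⁻²`, then for every `σ > 0` and `L > 0` the integral of `F` over
the diagonal band `Δ_0^σ = {(b,d) ∈ W : d - b < σ}` is at most `(L C₂ + 3 C₃ / L) σ`;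
in particular there is a constant `C > 0`, independent of `σ`, with
`∫_{Δ_0^σ} F ≤ C σ`. -/
theorem band_integral_bound (F : ℝ × ℝ → ℝ) (C₂ C₃ : ℝ)
    (hC₂ : 0 < C₂) (hC₃ : 0 < C₃)
    (hF0 : ∀ x : ℝ × ℝ, 0 ≤ F x)
    (hFb : ∀ x : ℝ × ℝ, F x ≤ C₂)
    (hFd : ∀ x : ℝ × ℝ, 0 ≤ x.1 → x.1 < x.2 → F x ≤ C₃ / x.2 ^ 2) :
    (∀ σ > (0 : ℝ), ∀ L > (0 : ℝ),
      ∫ x in {x : ℝ × ℝ | 0 ≤ x.1 ∧ x.1 < x.2 ∧ x.2 - x.1 < σ}, F x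
        ≤ (L * C₂ + 3 * C₃ / L) * σ) ∧
    (∃ C > (0 : ℝ), ∀ σ > (0 : ℝ),
      ∫ x in {x : ℝ × ℝ | 0 ≤ x.1 ∧ x.1 < x.2 ∧ x.2 - x.1 < σ}, F x ≤ C * σ) := by
  have main : ∀ σ > (0 : ℝ), ∀ L > (0 : ℝ),
      ∫ x in {x : ℝ × ℝ | 0 ≤ x.1 ∧ x.1 < x.2 ∧ x.2 - x.1 < σ}, F x
        ≤ (L * C₂ + 3 * C₃ / L) * σ := by
    intro σ hσ L hL
    set S : Set (ℝ × ℝ) := {x : ℝ × ℝ | 0 ≤ x.1 ∧ x.1 < x.2 ∧ x.2 - x.1 < σ} with hS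
    have hRHS : (0:ℝ) ≤ (L * C₂ + 3 * C₃ / L) * σ := by positivity
    by_cases hInt : IntegrableOn F S volume
    · rw [MeasureTheory.integral_eq_lintegral_of_nonneg_ae
        (Filter.Eventually.of_forall fun x => hF0 x) hInt.aestronglyMeasurable]
      exact ENNReal.toReal_le_of_le_ofReal hRHS
        (key_lintegral F C₂ C₃ hC₂ hC₃ hFb hFd hσ hL)
    · rw [MeasureTheory.integral_undef hInt]
      exact hRHS
  refine ⟨main, ⟨C₂ + 3 * C₃, by positivity, fun σ hσ => ?_⟩⟩
  have := main σ hσ 1 one_pos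
  calc ∫ x in {x : ℝ × ℝ | 0 ≤ x.1 ∧ x.1 < x.2 ∧ x.2 - x.1 < σ}, F x
      ≤ (1 * C₂ + 3 * C₃ / 1) * σ := this
    _ = (C₂ + 3 * C₃) * σ := by ring
end

section
/- Let f be the global pdf of a random persistence diagram D with |D| ≤ M a.s., such that each local density f_N on W^N is bounded by C₂ and satisfies f_N(ξ_1,...,ξ_N) ≤ C₃ ‖(ξ_1,...,ξ_N)‖^{-2N-2}. Then the expected maximal persistence E[max_i (d_i - b_i)] is finite, and consequently for any fixed persistence diagram 𝒟₀, the mean absolute bottleneck deviation MAD_f(𝒟₀) = ∫ W_∞(𝒟₀, Z) f(Z) δZ is finite. -/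
/-!
The integrands are at most `(a + b‖ξ‖) f_N(ξ)`: the maximal persistence of `ξ` is at most
`2‖ξ‖`, and the empty matching bounds `W_∞(𝒟₀, ξ)` by the larger of the half-persistences
in `𝒟₀` and in `ξ`. On `W^N ⊆ ℝ^{2N}` the bound `C₂` near the origin and the decay
`C₃‖ξ‖^{-2N-2}` far from it give `f_N(ξ) ≲ (1 + ‖ξ‖)^{-(2N+2)}`, so the integrands are
`≲ (1 + ‖ξ‖)^{-(2N+1)}`, which is integrable on `ℝ^{2N}`.
-/

open MeasureTheory Module Real

/-- Sup-norm distance between planar points. -/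
noncomputable def supDist (x y : ℝ × ℝ) : ℝ := max |x.1 - y.1| |x.2 - y.2|

/-- Half the persistence of a feature: its sup-norm distance to the diagonal. -/
noncomputable def persHalf (x : ℝ × ℝ) : ℝ := (x.2 - x.1) / 2

/-- `BottleneckLE D₁ D₂ r`: there is a partial matching between the diagrams `D₁, D₂`
moving each matched pair by at most `r` (sup-norm) and leaving only features within `r`
of the diagonal unmatched. -/
def BottleneckLE (D₁ D₂ : Multiset (ℝ × ℝ)) (r : ℝ) : Prop :=
  ∃ m : Multiset ((ℝ × ℝ) × (ℝ × ℝ)),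
    m.map Prod.fst ≤ D₁ ∧ m.map Prod.snd ≤ D₂ ∧
    (∀ p ∈ m, supDist p.1 p.2 ≤ r) ∧
    (∀ x ∈ D₁ - m.map Prod.fst, persHalf x ≤ r) ∧
    (∀ y ∈ D₂ - m.map Prod.snd, persHalf y ≤ r)

/-- The bottleneck distance between two persistence diagrams (finite multisets in the
plane), where features may be matched to the diagonal. -/
noncomputable def bottleneck (D₁ D₂ : Multiset (ℝ × ℝ)) : ℝ :=
  sInf {r : ℝ | 0 ≤ r ∧ BottleneckLE D₁ D₂ r}

lemma le_mul_one_add_rpow_neg {y t C C' s : ℝ} (hy : 0 ≤ y) (ht : 0 ≤ t) (hs : 0 ≤ s)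
    (hC : y ≤ C) (hC' : 1 ≤ t → y ≤ C' * t ^ (-s)) :
    y ≤ max C C' * 2 ^ s * (1 + t) ^ (-s) := by
  have hmax : 0 ≤ max C C' := hy.trans (hC.trans (le_max_left _ _))
  have hhalf : 2 ^ s * (1 + t) ^ (-s) = ((1 + t) / 2) ^ (-s) := by
    rw [div_rpow (by linarith) zero_le_two, rpow_neg zero_le_two, div_eq_mul_inv, inv_inv,
      mul_comm]
  rw [mul_assoc, hhalf]
  rcases le_total t 1 with h | h
  · calc y ≤ max C C' := hC.trans (le_max_left _ _)
      _ ≤ max C C' * ((1 + t) / 2) ^ (-s) :=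
        le_mul_of_one_le_right hmax
          (one_le_rpow_of_pos_of_le_one_of_nonpos (by positivity) (by linarith) (by linarith))
  · calc y ≤ C' * t ^ (-s) := hC' h
      _ ≤ max C C' * t ^ (-s) := by gcongr; exact le_max_right _ _
      _ ≤ max C C' * ((1 + t) / 2) ^ (-s) :=
        mul_le_mul_of_nonneg_left
          (rpow_le_rpow_of_nonpos (by positivity) (by linarith) (by linarith)) hmax

theorem lintegral_ofReal_mul_lt_top_of_le_rpow_neg {E : Type*} [NormedAddCommGroup E]
    [NormedSpace ℝ E] [FiniteDimensional ℝ E] [MeasurableSpace E] [BorelSpace E]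
    (μ : Measure E) [μ.IsAddHaarMeasure] {F g : E → ℝ} {C C' a b : ℝ}
    (hF0 : ∀ x, 0 ≤ F x) (hFC : ∀ x, F x ≤ C)
    (hdecay : ∀ x, x ≠ 0 → F x ≤ C' * ‖x‖ ^ (-(finrank ℝ E : ℝ) - 2))
    (hg : ∀ x, g x ≤ a + b * ‖x‖) :
    ∫⁻ x, ENNReal.ofReal (g x * F x) ∂μ < ⊤ := by
  set d : ℝ := (finrank ℝ E : ℝ)
  set K : ℝ := (|a| + |b|) * (max C C' * 2 ^ (d + 2))
  have hF (x : E) : F x ≤ max C C' * 2 ^ (d + 2) * (1 + ‖x‖) ^ (-(d + 2)) := by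
    refine le_mul_one_add_rpow_neg (hF0 x) (norm_nonneg x) (by positivity) (hFC x) fun hx => ?_
    rw [neg_add']
    exact hdecay x (norm_pos_iff.mp (one_pos.trans_le hx))
  have hpoint (x : E) : g x * F x ≤ K * (1 + ‖x‖) ^ (-(d + 1)) := by
    have hx := norm_nonneg x
    have hweight : g x ≤ (|a| + |b|) * (1 + ‖x‖) := by
      nlinarith [hg x, le_abs_self a, le_abs_self b, abs_nonneg a, abs_nonneg b]
    calc g x * F x ≤ (|a| + |b|) * (1 + ‖x‖) * F x := by gcongr; exact hF0 x
      _ ≤ (|a| + |b|) * (1 + ‖x‖) * (max C C' * 2 ^ (d + 2) * (1 + ‖x‖) ^ (-(d + 2))) := by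
        gcongr; exact hF x
      _ = K * (1 + ‖x‖) ^ (-(d + 2) + 1) := by
        rw [rpow_add_one (by positivity)]; ring
      _ = K * (1 + ‖x‖) ^ (-(d + 1)) := by ring_nf
  have hK : 0 ≤ K := by
    have := (hF0 0).trans (hFC 0)
    positivity
  calc ∫⁻ x, ENNReal.ofReal (g x * F x) ∂μ
      ≤ ∫⁻ x, ENNReal.ofReal K * ENNReal.ofReal ((1 + ‖x‖) ^ (-(d + 1))) ∂μ :=
        lintegral_mono fun x => (ENNReal.ofReal_le_ofReal (hpoint x)).trans_eq
          (ENNReal.ofReal_mul hK)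
    _ = ENNReal.ofReal K * ∫⁻ x, ENNReal.ofReal ((1 + ‖x‖) ^ (-(d + 1))) ∂μ :=
        lintegral_const_mul' _ _ ENNReal.ofReal_ne_top
    _ < ⊤ := ENNReal.mul_lt_top ENNReal.ofReal_lt_top
        (finite_integral_one_add_norm (lt_add_one d))

lemma persHalf_le_norm (x : ℝ × ℝ) : persHalf x ≤ ‖x‖ := by
  have h₁ := abs_le.mp (norm_fst_le x)
  have h₂ := abs_le.mp (norm_snd_le x)
  unfold persHalf
  linarith

lemma snd_sub_fst_le_two_mul_norm {N : ℕ} (ξ : Fin N → ℝ × ℝ) (i : Fin N) :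
    (ξ i).2 - (ξ i).1 ≤ 2 * ‖ξ‖ := by
  have := (persHalf_le_norm (ξ i)).trans (norm_le_pi_norm ξ i)
  unfold persHalf at this
  linarith

lemma bottleneck_le_of_persHalf_le {D₁ D₂ : Multiset (ℝ × ℝ)} {r : ℝ} (hr : 0 ≤ r)
    (h₁ : ∀ x ∈ D₁, persHalf x ≤ r) (h₂ : ∀ y ∈ D₂, persHalf y ≤ r) :
    bottleneck D₁ D₂ ≤ r :=
  csInf_le ⟨0, fun _ h => h.1⟩
    ⟨hr, 0, by simp, by simp, by simp, by simpa using h₁, by simpa using h₂⟩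

lemma exists_bottleneck_ofFn_le_add_norm (D : Multiset (ℝ × ℝ)) :
    ∃ c, ∀ N (ξ : Fin N → ℝ × ℝ), bottleneck D ↑(List.ofFn ξ) ≤ c + ‖ξ‖ := by
  obtain ⟨c, hc⟩ := (D.toFinset.finite_toSet.image persHalf).bddAbove
  refine ⟨max c 0, fun N ξ => bottleneck_le_of_persHalf_le (by positivity) ?_ ?_⟩
  · intro x hx
    have := hc ⟨x, Multiset.mem_toFinset.mpr hx, rfl⟩
    linarith [le_max_left c 0, norm_nonneg ξ]
  · intro y hy
    obtain ⟨i, rfl⟩ := List.mem_ofFn.mp (Multiset.mem_coe.mp hy)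
    linarith [persHalf_le_norm (ξ i), norm_le_pi_norm ξ i, le_max_right c 0]

theorem mad_finite_general (M : ℕ) (C₂ C₃ : ℝ)
    (f : (N : ℕ) → (Fin N → ℝ × ℝ) → ℝ)
    (h0 : ∀ N ξ, 0 ≤ f N ξ)
    (hA2 : ∀ N ξ, f N ξ ≤ C₂)
    (hA3 : ∀ N (ξ : Fin N → ℝ × ℝ), ξ ≠ 0 →
      f N ξ ≤ C₃ * ‖ξ‖ ^ (-(2 * (N : ℝ)) - 2)) :
    (∑ N ∈ Finset.Icc 1 M, ((N.factorial : ENNReal))⁻¹ *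
        ∫⁻ ξ : Fin N → ℝ × ℝ,
          ENNReal.ofReal ((⨆ i : Fin N, ((ξ i).2 - (ξ i).1)) * f N ξ)) < ⊤ ∧
    ∀ 𝒟₀ : Multiset (ℝ × ℝ),
      (∑ N ∈ Finset.range (M + 1), ((N.factorial : ENNReal))⁻¹ *
          ∫⁻ ξ : Fin N → ℝ × ℝ,
            ENNReal.ofReal (bottleneck 𝒟₀ ↑(List.ofFn ξ) * f N ξ)) < ⊤ := by
  have hterm (N : ℕ) (g : (Fin N → ℝ × ℝ) → ℝ) (a b : ℝ) (hg : ∀ ξ, g ξ ≤ a + b * ‖ξ‖) :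
      (N.factorial : ENNReal)⁻¹ * ∫⁻ ξ, ENNReal.ofReal (g ξ * f N ξ) < ⊤ := by
    have hdim : (finrank ℝ (Fin N → ℝ × ℝ) : ℝ) = 2 * N := by
      simp [finrank_pi_fintype, finrank_prod, mul_comm]
    refine ENNReal.mul_lt_top (ENNReal.inv_lt_top.mpr (by exact_mod_cast N.factorial_pos)) ?_
    exact lintegral_ofReal_mul_lt_top_of_le_rpow_neg volume (h0 N) (hA2 N)
      (by simpa only [hdim] using hA3 N) hg
  refine ⟨ENNReal.sum_lt_top.mpr fun N _ => hterm N _ 0 2 fun ξ => ?_, fun 𝒟₀ => ?_⟩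
  · rw [zero_add]
    exact Real.iSup_le (snd_sub_fst_le_two_mul_norm ξ) (by positivity)
  · obtain ⟨c, hc⟩ := exists_bottleneck_ofFn_le_add_norm 𝒟₀
    exact ENNReal.sum_lt_top.mpr fun N _ => hterm N _ c 1 fun ξ => by simpa using hc N ξ

/-- Finiteness of the mean absolute bottleneck deviation: if the local densities
`f N : W^N → ℝ` of a random persistence diagram with `|D| ≤ M` are bounded by `C₂` and
satisfy the decay `f N ξ ≤ C₃ ‖ξ‖^{-2N-2}`, then the expected maximal persistence
`∑_{N=1}^M (1/N!) ∫ max_i (d_i - b_i) f_N` is finite, and for every origin diagram `𝒟₀`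
the mean absolute bottleneck deviation
`MAD_f(𝒟₀) = ∑_{N=0}^M (1/N!) ∫ W_∞(𝒟₀, Z) f_N(Z) dZ` is finite. -/
theorem mad_finite (M : ℕ) (C₂ C₃ : ℝ)
    (f : (N : ℕ) → (Fin N → ℝ × ℝ) → ℝ)
    (hmeas : ∀ N, Measurable (f N))
    (h0 : ∀ N ξ, 0 ≤ f N ξ)
    (hwedge : ∀ N ξ, (¬ ∀ i, 0 ≤ (ξ i).1 ∧ (ξ i).1 < (ξ i).2) → f N ξ = 0)
    (hA1 : ∀ N > M, ∀ ξ, f N ξ = 0)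
    (hA2 : ∀ N ξ, f N ξ ≤ C₂)
    (hA3 : ∀ N (ξ : Fin N → ℝ × ℝ), ξ ≠ 0 →
      f N ξ ≤ C₃ * ‖ξ‖ ^ (-(2 * (N : ℝ)) - 2)) :
    (∑ N ∈ Finset.Icc 1 M, ((N.factorial : ENNReal))⁻¹ *
        ∫⁻ ξ : Fin N → ℝ × ℝ,
          ENNReal.ofReal ((⨆ i : Fin N, ((ξ i).2 - (ξ i).1)) * f N ξ)) < ⊤ ∧
    ∀ 𝒟₀ : Multiset (ℝ × ℝ),
      (∑ N ∈ Finset.range (M + 1), ((N.factorial : ENNReal))⁻¹ *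
          ∫⁻ ξ : Fin N → ℝ × ℝ,
            ENNReal.ofReal (bottleneck 𝒟₀ ↑(List.ofFn ξ) * f N ξ)) < ⊤ :=
  mad_finite_general M C₂ C₃ f h0 hA2 hA3
end
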